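/- (Limit comparison lemma) Let z ∈ X_pq be a stationary configuration and let v : [0,∞) → X_pq be a solution of the gradient flow with v(0) ≤ z. If there exists x* ∈ X_pq such that v(t)_k → x*_k as t → ∞ for every k ∈ ℤ, then x* ≤ z. Symmetrically, if z ≤ v(0) then z ≤ x*. -/

import Mathlib

open Filter Set

/-- First partial derivative of the generating function. -/
noncomputable def pd1 (h : ℝ → ℝ → ℝ) (a b : ℝ) : ℝ := deriv (fun s => h s b) a

/-- Second partial derivative of the generating function. -/
noncomputable def pd2 (h : ℝ → ℝ → ℝ) (a b : ℝ) : ℝ := deriv (fun s => h a s) b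

/-- Mixed second partial derivative ∂₁∂₂h. -/
noncomputable def pd12 (h : ℝ → ℝ → ℝ) (a b : ℝ) : ℝ := deriv (fun s => pd2 h s b) a

/-- The space of (p,q)-configurations: x (n+q) = x n + p. -/
def IsConfig (p : ℤ) (q : ℕ) (x : ℤ → ℝ) : Prop := ∀ n : ℤ, x (n + (q : ℤ)) = x n + (p : ℝ)

/-- Stationary configuration: the gradient of the action vanishes. -/
def Stationary (h : ℝ → ℝ → ℝ) (x : ℤ → ℝ) : Prop :=
  ∀ k : ℤ, pd2 h (x (k - 1)) (x k) + pd1 h (x k) (x (k + 1)) = 0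

/-- A solution of the gradient flow of the periodic action on a set I ⊆ ℝ. -/
def IsGradSol (h : ℝ → ℝ → ℝ) (p : ℤ) (q : ℕ) (I : Set ℝ) (ξ : ℝ → ℤ → ℝ) : Prop :=
  (∀ t ∈ I, IsConfig p q (ξ t)) ∧
  ∀ k : ℤ, ∀ t ∈ I, HasDerivWithinAt (fun s => ξ s k)
    (-(pd2 h (ξ t (k - 1)) (ξ t k) + pd1 h (ξ t k) (ξ t (k + 1)))) I t

section Aux
variable {h : ℝ → ℝ → ℝ}

lemma pd1_eq (hd : Differentiable ℝ (Function.uncurry h)) (a b : ℝ) :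
    pd1 h a b = fderiv ℝ (Function.uncurry h) (a, b) (1, 0) := by
  have h1 : HasDerivAt (fun s : ℝ => ((s, b) : ℝ × ℝ)) (1, 0) a :=
    HasDerivAt.prodMk (hasDerivAt_id a) (hasDerivAt_const a b)
  have h2 := (hd (a, b)).hasFDerivAt.comp_hasDerivAt a h1
  exact h2.deriv

lemma pd2_eq (hd : Differentiable ℝ (Function.uncurry h)) (a b : ℝ) :
    pd2 h a b = fderiv ℝ (Function.uncurry h) (a, b) (0, 1) := by
  have h1 : HasDerivAt (fun s : ℝ => ((a, s) : ℝ × ℝ)) (0, 1) b :=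
    HasDerivAt.prodMk (hasDerivAt_const b a) (hasDerivAt_id b)
  have h2 := (hd (a, b)).hasFDerivAt.comp_hasDerivAt b h1
  exact h2.deriv

lemma fderiv_lip (hC2 : ContDiff ℝ 2 (Function.uncurry h)) {C : ℝ}
    (hbd : ∀ v : ℝ × ℝ, ‖iteratedFDeriv ℝ 2 (Function.uncurry h) v‖ ≤ C)
    (x y : ℝ × ℝ) :
    ‖fderiv ℝ (Function.uncurry h) y - fderiv ℝ (Function.uncurry h) x‖ ≤ C * ‖y - x‖ := by
  have hg : ContDiff ℝ 1 (fderiv ℝ (Function.uncurry h)) := hC2.fderiv_right (by norm_num)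
  refine Convex.norm_image_sub_le_of_norm_fderiv_le
    (fun v _ => (hg.differentiable one_ne_zero).differentiableAt) (fun v _ => ?_)
    convex_univ (mem_univ x) (mem_univ y)
  have e1 : ‖iteratedFDeriv ℝ 0 (fderiv ℝ (fderiv ℝ (Function.uncurry h))) v‖
      = ‖iteratedFDeriv ℝ 1 (fderiv ℝ (Function.uncurry h)) v‖ := by
    have := norm_iteratedFDeriv_fderiv (𝕜 := ℝ) (f := fderiv ℝ (Function.uncurry h))
      (n := 0) (x := v)
    simpa using this
  have e2 : ‖iteratedFDeriv ℝ 1 (fderiv ℝ (Function.uncurry h)) v‖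
      = ‖iteratedFDeriv ℝ 2 (Function.uncurry h) v‖ :=
    norm_iteratedFDeriv_fderiv (𝕜 := ℝ) (f := Function.uncurry h) (n := 1) (x := v)
  calc ‖fderiv ℝ (fderiv ℝ (Function.uncurry h)) v‖
      = ‖iteratedFDeriv ℝ 0 (fderiv ℝ (fderiv ℝ (Function.uncurry h))) v‖ :=
        by rw [norm_iteratedFDeriv_zero]
    _ ≤ C := by rw [e1, e2]; exact hbd v

lemma apply_lip (hC2 : ContDiff ℝ 2 (Function.uncurry h)) {C : ℝ}
    (hbd : ∀ v : ℝ × ℝ, ‖iteratedFDeriv ℝ 2 (Function.uncurry h) v‖ ≤ C)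
    (x y : ℝ × ℝ) (u : ℝ × ℝ) (hu : ‖u‖ ≤ 1) :
    |fderiv ℝ (Function.uncurry h) y u - fderiv ℝ (Function.uncurry h) x u|
      ≤ C * ‖y - x‖ := by
  have hC : 0 ≤ C := le_trans (norm_nonneg _) (hbd 0)
  have h1 : fderiv ℝ (Function.uncurry h) y u - fderiv ℝ (Function.uncurry h) x u
      = (fderiv ℝ (Function.uncurry h) y - fderiv ℝ (Function.uncurry h) x) u := by simp
  rw [h1, ← Real.norm_eq_abs]
  calc ‖(fderiv ℝ (Function.uncurry h) y - fderiv ℝ (Function.uncurry h) x) u‖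
      ≤ ‖fderiv ℝ (Function.uncurry h) y - fderiv ℝ (Function.uncurry h) x‖ * ‖u‖ :=
        ContinuousLinearMap.le_opNorm _ _
    _ ≤ (C * ‖y - x‖) * 1 :=
        mul_le_mul (fderiv_lip hC2 hbd x y) hu (norm_nonneg _) (by positivity)
    _ = C * ‖y - x‖ := by ring

lemma norm_pair (a b : ℝ) : ‖((a, b) : ℝ × ℝ)‖ = max |a| |b| := by
  simp [Prod.norm_def]

lemma pd2_lip (hC2 : ContDiff ℝ 2 (Function.uncurry h)) {C : ℝ}
    (hbd : ∀ v : ℝ × ℝ, ‖iteratedFDeriv ℝ 2 (Function.uncurry h) v‖ ≤ C)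
    (a b a' b' : ℝ) :
    |pd2 h a b - pd2 h a' b'| ≤ C * (max |a - a'| |b - b'|) := by
  have hd : Differentiable ℝ (Function.uncurry h) := hC2.differentiable two_ne_zero
  rw [pd2_eq hd, pd2_eq hd]
  have := apply_lip hC2 hbd (a', b') (a, b) (0, 1) (by rw [norm_pair]; norm_num)
  have e : ((a, b) : ℝ × ℝ) - (a', b') = (a - a', b - b') := rfl
  rwa [e, norm_pair] at this

lemma pd1_lip (hC2 : ContDiff ℝ 2 (Function.uncurry h)) {C : ℝ}
    (hbd : ∀ v : ℝ × ℝ, ‖iteratedFDeriv ℝ 2 (Function.uncurry h) v‖ ≤ C)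
    (a b a' b' : ℝ) :
    |pd1 h a b - pd1 h a' b'| ≤ C * (max |a - a'| |b - b'|) := by
  have hd : Differentiable ℝ (Function.uncurry h) := hC2.differentiable two_ne_zero
  rw [pd1_eq hd, pd1_eq hd]
  have := apply_lip hC2 hbd (a', b') (a, b) (1, 0) (by rw [norm_pair]; norm_num)
  have e : ((a, b) : ℝ × ℝ) - (a', b') = (a - a', b - b') := rfl
  rwa [e, norm_pair] at this

lemma hasDerivAt_pd2_fst (hC2 : ContDiff ℝ 2 (Function.uncurry h)) (a b : ℝ) :
    HasDerivAt (fun s => pd2 h s b)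
      (fderiv ℝ (fderiv ℝ (Function.uncurry h)) (a, b) (1, 0) (0, 1)) a := by
  have hd : Differentiable ℝ (Function.uncurry h) := hC2.differentiable two_ne_zero
  have hg : ContDiff ℝ 1 (fderiv ℝ (Function.uncurry h)) := hC2.fderiv_right (by norm_num)
  have h1 : HasDerivAt (fun s : ℝ => ((s, b) : ℝ × ℝ)) (1, 0) a :=
    HasDerivAt.prodMk (hasDerivAt_id a) (hasDerivAt_const a b)
  have h2 : HasDerivAt (fun s : ℝ => fderiv ℝ (Function.uncurry h) (s, b))
      (fderiv ℝ (fderiv ℝ (Function.uncurry h)) (a, b) (1, 0)) a :=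
    ((hg.differentiable one_ne_zero) (a, b)).hasFDerivAt.comp_hasDerivAt a h1
  have h3 := h2.clm_apply (hasDerivAt_const a ((0 : ℝ), (1 : ℝ)))
  simp only [map_zero, add_zero] at h3
  have e : (fun s => pd2 h s b)
      = fun s : ℝ => fderiv ℝ (Function.uncurry h) (s, b) (0, 1) := by
    funext s; exact pd2_eq hd s b
  rw [e]
  exact h3

lemma hasDerivAt_pd1_snd (hC2 : ContDiff ℝ 2 (Function.uncurry h)) (a b : ℝ) :
    HasDerivAt (fun s => pd1 h a s)
      (fderiv ℝ (fderiv ℝ (Function.uncurry h)) (a, b) (0, 1) (1, 0)) b := by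
  have hd : Differentiable ℝ (Function.uncurry h) := hC2.differentiable two_ne_zero
  have hg : ContDiff ℝ 1 (fderiv ℝ (Function.uncurry h)) := hC2.fderiv_right (by norm_num)
  have h1 : HasDerivAt (fun s : ℝ => ((a, s) : ℝ × ℝ)) (0, 1) b :=
    HasDerivAt.prodMk (hasDerivAt_const b a) (hasDerivAt_id b)
  have h2 : HasDerivAt (fun s : ℝ => fderiv ℝ (Function.uncurry h) (a, s))
      (fderiv ℝ (fderiv ℝ (Function.uncurry h)) (a, b) (0, 1)) b :=
    ((hg.differentiable one_ne_zero) (a, b)).hasFDerivAt.comp_hasDerivAt b h1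
  have h3 := h2.clm_apply (hasDerivAt_const b ((1 : ℝ), (0 : ℝ)))
  simp only [map_zero, add_zero] at h3
  have e : (fun s => pd1 h a s)
      = fun s : ℝ => fderiv ℝ (Function.uncurry h) (a, s) (1, 0) := by
    funext s; exact pd1_eq hd a s
  rw [e]
  exact h3

lemma pd12_eq (hC2 : ContDiff ℝ 2 (Function.uncurry h)) (a b : ℝ) :
    pd12 h a b = fderiv ℝ (fderiv ℝ (Function.uncurry h)) (a, b) (1, 0) (0, 1) :=
  (hasDerivAt_pd2_fst hC2 a b).deriv

lemma deriv_pd1_snd (hC2 : ContDiff ℝ 2 (Function.uncurry h)) (a b : ℝ) :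
    deriv (fun s => pd1 h a s) b = pd12 h a b := by
  have hd : Differentiable ℝ (Function.uncurry h) := hC2.differentiable two_ne_zero
  have hg : ContDiff ℝ 1 (fderiv ℝ (Function.uncurry h)) := hC2.fderiv_right (by norm_num)
  rw [(hasDerivAt_pd1_snd hC2 a b).deriv, pd12_eq hC2]
  exact second_derivative_symmetric (fun y => (hd y).hasFDerivAt)
    ((hg.differentiable one_ne_zero (a, b)).hasFDerivAt) _ _

lemma pd2_anti (htwist : ∀ a b : ℝ, pd12 h a b < 0) (b : ℝ) :
    StrictAnti (fun s => pd2 h s b) :=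
  strictAnti_of_deriv_neg (fun s => htwist s b)

lemma pd1_anti (hC2 : ContDiff ℝ 2 (Function.uncurry h))
    (htwist : ∀ a b : ℝ, pd12 h a b < 0) (a : ℝ) :
    StrictAnti (fun s => pd1 h a s) :=
  strictAnti_of_deriv_neg (fun s => by rw [deriv_pd1_snd hC2 a s]; exact htwist a s)

lemma core_estimate {C : ℝ} (hC : 0 ≤ C)
    (lip2 : ∀ a b a' b' : ℝ, |pd2 h a b - pd2 h a' b'| ≤ C * (max |a - a'| |b - b'|))
    (lip1 : ∀ a b a' b' : ℝ, |pd1 h a b - pd1 h a' b'| ≤ C * (max |a - a'| |b - b'|))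
    (anti2 : ∀ b : ℝ, StrictAnti (fun s => pd2 h s b))
    (anti1 : ∀ a : ℝ, StrictAnti (fun s => pd1 h a s))
    (a a' b b' c c' M : ℝ) (hM : 0 ≤ M)
    (h1 : a - a' ≤ M) (h2 : b - b' = M) (h3 : c - c' ≤ M) :
    (pd2 h a' b' - pd2 h a b) + (pd1 h b' c' - pd1 h b c) ≤ 4 * (C * M) := by
  have hbb : |b' - b| = M := by rw [abs_sub_comm, h2, abs_of_nonneg hM]
  have p1 : pd2 h a' b' - pd2 h a' b ≤ C * M := by
    have := lip2 a' b' a' b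
    have e : max |a' - a'| |b' - b| = M := by
      rw [sub_self, abs_zero, hbb]; exact max_eq_right hM
    rw [e] at this
    exact le_trans (le_abs_self _) this
  have p2 : pd2 h a' b - pd2 h a b ≤ C * M := by
    rcases le_or_gt a a' with hle | hlt
    · have : pd2 h a' b ≤ pd2 h a b := (anti2 b).antitone hle
      nlinarith
    · have habs : |a' - a| ≤ M := by
        rw [abs_of_nonpos (by linarith)]; linarith
      have := lip2 a' b a b
      have e : max |a' - a| |b - b| ≤ M := by
        rw [sub_self, abs_zero]; exact max_le habs hM
      calc pd2 h a' b - pd2 h a b ≤ |pd2 h a' b - pd2 h a b| := le_abs_self _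
        _ ≤ C * max |a' - a| |b - b| := this
        _ ≤ C * M := by nlinarith
  have p3 : pd1 h b' c' - pd1 h b c' ≤ C * M := by
    have := lip1 b' c' b c'
    have e : max |b' - b| |c' - c'| = M := by
      rw [sub_self, abs_zero, hbb]; exact max_eq_left hM
    rw [e] at this
    exact le_trans (le_abs_self _) this
  have p4 : pd1 h b c' - pd1 h b c ≤ C * M := by
    rcases le_or_gt c c' with hle | hlt
    · have : pd1 h b c' ≤ pd1 h b c := (anti1 b).antitone hle
      nlinarith
    · have habs : |c' - c| ≤ M := by
        rw [abs_of_nonpos (by linarith)]; linarith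
      have := lip1 b c' b c
      have e : max |b - b| |c' - c| ≤ M := by
        rw [sub_self, abs_zero]; exact max_le hM habs
      calc pd1 h b c' - pd1 h b c ≤ |pd1 h b c' - pd1 h b c| := le_abs_self _
        _ ≤ C * max |b - b| |c' - c| := this
        _ ≤ C * M := by nlinarith
  linarith

end Aux

lemma contOn_sup' {ι : Type*} (f : ι → ℝ → ℝ) (S : Set ℝ) :
    ∀ (s : Finset ι) (hs : s.Nonempty), (∀ i ∈ s, ContinuousOn (f i) S) →
      ContinuousOn (fun t => s.sup' hs (fun i => f i t)) S := by
  intro s hs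
  induction hs using Finset.Nonempty.cons_induction with
  | singleton a => intro hf; simpa using hf a (by simp)
  | cons a s ha hs ih =>
      intro hf
      have e : (fun t => (Finset.cons a s ha).sup' (Finset.cons_nonempty ha) (fun i => f i t))
          = fun t => f a t ⊔ s.sup' hs (fun i => f i t) := by
        funext t; rw [Finset.sup'_cons]
      rw [e]
      exact (hf a (Finset.mem_cons_self a s)).sup
        (ih fun i hi => hf i (Finset.mem_cons.2 (Or.inr hi)))

lemma flow_nonpos (q : ℕ) (hq : 0 < q) {K : ℝ} (hK : 0 ≤ K)
    (W D : ℤ → ℝ → ℝ)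
    (hper : ∀ k : ℤ, ∀ t ∈ Ici (0:ℝ), W (k + (q:ℤ)) t = W k t)
    (hderiv : ∀ k : ℤ, ∀ t ∈ Ici (0:ℝ), HasDerivWithinAt (W k) (D k t) (Ici 0) t)
    (hbound : ∀ t ∈ Ici (0:ℝ), ∀ (k : ℤ) (M : ℝ), 0 ≤ M → (∀ j : ℤ, W j t ≤ M) →
        W k t = M → D k t ≤ K * M)
    (hinit : ∀ k : ℤ, W k 0 ≤ 0) :
    ∀ t ∈ Ici (0:ℝ), ∀ k : ℤ, W k t ≤ 0 := by
  have hq' : (0:ℤ) < (q:ℤ) := by exact_mod_cast hq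
  have red : ∀ (t : ℝ), t ∈ Ici (0:ℝ) → ∀ k : ℤ, ∃ j : ℕ, j < q ∧ W k t = W (j:ℤ) t := by
    intro t ht k
    have hn : ∀ n : ℤ, ∀ k : ℤ, W (k + n * (q:ℤ)) t = W k t := by
      intro n
      induction n using Int.induction_on with
      | zero => intro k; simp
      | succ n ih =>
          intro k
          have e : k + ((n:ℤ) + 1) * (q:ℤ) = (k + n * q) + q := by ring
          rw [e, hper _ t ht, ih]
      | pred n ih =>
          intro k
          have e : k + (-(n:ℤ) - 1) * (q:ℤ) + (q:ℤ) = k + (-(n:ℤ)) * q := by ring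
          calc W (k + (-(n:ℤ) - 1) * (q:ℤ)) t
              = W (k + (-(n:ℤ) - 1) * (q:ℤ) + (q:ℤ)) t := (hper _ t ht).symm
            _ = W (k + (-(n:ℤ)) * (q:ℤ)) t := by rw [e]
            _ = W k t := ih k
    refine ⟨(k % (q:ℤ)).toNat, ?_, ?_⟩
    · have h1 : k % (q:ℤ) < q := Int.emod_lt_of_pos k hq'
      have h2 : 0 ≤ k % (q:ℤ) := Int.emod_nonneg k hq'.ne'
      omega
    · have h2 : 0 ≤ k % (q:ℤ) := Int.emod_nonneg k hq'.ne'
      have e : ((k % (q:ℤ)).toNat : ℤ) = k % (q:ℤ) := Int.toNat_of_nonneg h2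
      rw [e]
      have e2 : k = k % (q:ℤ) + (k / (q:ℤ)) * (q:ℤ) := by
        have := Int.mul_ediv_add_emod k (q:ℤ); linarith
      conv_lhs => rw [e2]
      exact hn (k / (q:ℤ)) (k % (q:ℤ))
  set F : ℕ → ℝ → ℝ := fun j t => if j < q then W (j:ℤ) t else 0 with hF
  have hne : (Finset.range (q+1)).Nonempty := Finset.nonempty_range_iff.2 (Nat.succ_ne_zero q)
  set g : ℝ → ℝ := fun t => (Finset.range (q+1)).sup' hne (fun j => F j t) with hg
  have g_nonneg : ∀ t, 0 ≤ g t := by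
    intro t
    have h1 : F q t ≤ g t := Finset.le_sup' (fun j => F j t) (Finset.mem_range.2 (lt_add_one q))
    simpa [hF] using h1
  have W_le_g : ∀ t ∈ Ici (0:ℝ), ∀ k : ℤ, W k t ≤ g t := by
    intro t ht k
    obtain ⟨j, hjq, hjk⟩ := red t ht k
    have h1 : F j t ≤ g t :=
      Finset.le_sup' (fun j => F j t) (Finset.mem_range.2 (Nat.lt_succ_of_lt hjq))
    rw [hjk]
    simpa [hF, hjq] using h1
  have g_zero : g 0 ≤ 0 := by
    refine Finset.sup'_le hne (fun j => F j 0) fun j _ => ?_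
    by_cases hjq : j < q <;> simp [hF, hjq, hinit]
  have FDeriv : ∀ j : ℕ, ∀ x ∈ Ici (0:ℝ),
      HasDerivWithinAt (F j) (if j < q then D (j:ℤ) x else 0) (Ici 0) x := by
    intro j x hx
    by_cases hjq : j < q
    · have e : F j = W (j:ℤ) := by funext t; simp [hF, hjq]
      rw [e, if_pos hjq]; exact hderiv _ x hx
    · have e : F j = fun _ => (0:ℝ) := by funext t; simp [hF, hjq]
      rw [e, if_neg hjq]; exact hasDerivWithinAt_const x _ 0
  have key : ∀ T : ℝ, 0 ≤ T → ∀ x ∈ Icc (0:ℝ) T, g x ≤ 0 := by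
    intro T hT
    have hcont : ContinuousOn g (Icc 0 T) := by
      refine contOn_sup' F (Icc 0 T) _ hne fun j _ => ?_
      intro x hx
      exact ((FDeriv j x hx.1).continuousWithinAt).mono (fun y hy => hy.1)
    have hf' : ∀ x ∈ Ico (0:ℝ) T, ∀ r, K * g x < r →
        ∃ᶠ z in nhdsWithin x (Ioi x), (z - x)⁻¹ * (g z - g x) < r := by
      intro x hx r hr
      have hx0 : x ∈ Ici (0:ℝ) := hx.1
      set u : ℕ → ℝ := fun n => x + 1/((n:ℝ)+1) with hu
      have hupos : ∀ n, x < u n := by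
        intro n
        have : (0:ℝ) < 1/((n:ℝ)+1) := by positivity
        simp only [hu]; linarith
      have hulim : Tendsto u atTop (nhds x) := by
        have h1 : Tendsto (fun n : ℕ => x + 1/((n:ℝ)+1)) atTop (nhds (x + 0)) :=
          tendsto_const_nhds.add tendsto_one_div_add_atTop_nhds_zero_nat
        simpa [hu] using h1
      have hulim' : Tendsto u atTop (nhdsWithin x (Ioi x)) :=
        tendsto_nhdsWithin_of_tendsto_nhds_of_eventually_within _ hulim
          (Eventually.of_forall fun n => hupos n)
      have hch : ∀ n, ∃ i : ℕ, i ∈ Finset.range (q+1) ∧ g (u n) = F i (u n) := by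
        intro n
        obtain ⟨i, hi1, hi2⟩ := Finset.exists_mem_eq_sup' hne (fun j => F j (u n))
        exact ⟨i, hi1, hi2⟩
      choose j hj1 hj2 using hch
      have hjlt : ∀ n, j n < q + 1 := fun n => Finset.mem_range.1 (hj1 n)
      have hfreq : ∃ i0 : Fin (q+1), ∃ᶠ n in atTop, (⟨j n, hjlt n⟩ : Fin (q+1)) = i0 := by
        by_contra hcon
        push_neg at hcon
        have hall : ∀ᶠ n in atTop, ∀ i0 : Fin (q+1), (⟨j n, hjlt n⟩ : Fin (q+1)) ≠ i0 :=
          eventually_all.2 fun i0 => hcon i0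
        obtain ⟨n, hn⟩ := hall.exists
        exact hn _ rfl
      obtain ⟨i0, hi0⟩ := hfreq
      obtain ⟨φ, hφmono, hφ⟩ := extraction_of_frequently_atTop hi0
      have hjφ : ∀ n, j (φ n) = (i0 : ℕ) := fun n => congrArg Fin.val (hφ n)
      have hulimφ : Tendsto (fun n => u (φ n)) atTop (nhds x) :=
        hulim.comp hφmono.tendsto_atTop
      have huφ : Tendsto (fun n => u (φ n)) atTop (nhdsWithin x (Ioi x)) :=
        hulim'.comp hφmono.tendsto_atTop
      have hFd : HasDerivWithinAt (F (i0 : ℕ))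
          (if (i0 : ℕ) < q then D ((i0 : ℕ):ℤ) x else 0) (Ici 0) x :=
        FDeriv (i0 : ℕ) x hx0
      have hmemIci : ∀ n, u (φ n) ∈ Ici (0:ℝ) :=
        fun n => le_of_lt (lt_of_le_of_lt hx0 (hupos (φ n)))
      have hsub : ∀ᶠ n in atTop, u (φ n) ∈ Icc (0:ℝ) T := by
        have hlt : ∀ᶠ n in atTop, u (φ n) < T := hulimφ.eventually_lt_const hx.2
        filter_upwards [hlt] with n hn
        exact ⟨hmemIci n, le_of_lt hn⟩
      have hgc : Tendsto (fun n => g (u (φ n))) atTop (nhds (g x)) := by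
        have hcx : ContinuousWithinAt g (Icc 0 T) x := hcont x ⟨hx.1, le_of_lt hx.2⟩
        exact hcx.tendsto.comp
          (tendsto_nhdsWithin_of_tendsto_nhds_of_eventually_within _ hulimφ hsub)
      have hFc : Tendsto (fun n => F (i0 : ℕ) (u (φ n))) atTop (nhds (F (i0 : ℕ) x)) := by
        exact (hFd.continuousWithinAt).tendsto.comp
          (tendsto_nhdsWithin_of_tendsto_nhds_of_eventually_within _ hulimφ
            (Eventually.of_forall hmemIci))
      have hFeq : ∀ n, F (i0 : ℕ) (u (φ n)) = g (u (φ n)) := by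
        intro n
        rw [← hjφ n]
        exact (hj2 (φ n)).symm
      have hFgx : F (i0 : ℕ) x = g x := by
        refine tendsto_nhds_unique ?_ hgc
        have e : (fun n => F (i0 : ℕ) (u (φ n))) = fun n => g (u (φ n)) := funext hFeq
        rwa [e] at hFc
      have hD' : (if (i0 : ℕ) < q then D ((i0 : ℕ):ℤ) x else 0) ≤ K * g x := by
        by_cases hiq : (i0 : ℕ) < q
        · rw [if_pos hiq]
          refine hbound x hx0 ((i0 : ℕ):ℤ) (g x) (g_nonneg x) (fun j => W_le_g x hx0 j) ?_
          have e : F (i0 : ℕ) x = W ((i0 : ℕ):ℤ) x := by simp [hF, hiq]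
          rw [← e, hFgx]
        · rw [if_neg hiq]
          exact mul_nonneg hK (g_nonneg x)
      have hslope : Tendsto (fun n => slope (F (i0 : ℕ)) x (u (φ n))) atTop
          (nhds (if (i0 : ℕ) < q then D ((i0 : ℕ):ℤ) x else 0)) := by
        have h5 := hasDerivWithinAt_iff_tendsto_slope.1 hFd
        refine h5.comp
          (tendsto_nhdsWithin_of_tendsto_nhds_of_eventually_within _ hulimφ
            (Eventually.of_forall fun n => ⟨hmemIci n, (ne_of_gt (hupos (φ n)))⟩))
      have hev : ∀ᶠ n in atTop, slope (F (i0 : ℕ)) x (u (φ n)) < r :=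
        hslope.eventually_lt_const (lt_of_le_of_lt hD' hr)
      have hev2 : ∀ᶠ n in atTop, (u (φ n) - x)⁻¹ * (g (u (φ n)) - g x) < r := by
        filter_upwards [hev] with n hn
        have e : slope (F (i0 : ℕ)) x (u (φ n)) = (u (φ n) - x)⁻¹ * (g (u (φ n)) - g x) := by
          rw [slope_def_field, hFeq n, hFgx, div_eq_inv_mul]
        rwa [e] at hn
      exact huφ.frequently hev2.frequently
    have hmain := le_gronwallBound_of_liminf_deriv_right_le (f := g)
      (f' := fun x => K * g x) (δ := 0) (K := K) (ε := 0) (a := 0) (b := T)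
      hcont hf' g_zero (fun x _ => by rw [add_zero])
    intro x hx
    have := hmain x hx
    rwa [gronwallBound_ε0_δ0] at this
  intro t ht k
  have h1 := W_le_g t ht k
  have h2 := key t ht t ⟨ht, le_rfl⟩
  linarith

/-- Limit comparison lemma: the limit of a gradient-flow solution starting below
(resp. above) a stationary configuration z stays below (resp. above) z. -/
theorem limit_comparison
    (p : ℤ) (q : ℕ) (hq : 0 < q) (hpq : IsCoprime p (q : ℤ))
    (h : ℝ → ℝ → ℝ) (hC2 : ContDiff ℝ 2 (Function.uncurry h))
    (htwist : ∀ a b : ℝ, pd12 h a b < 0)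
    (hper : ∀ a b : ℝ, h (a + 1) (b + 1) = h a b)
    (hbd : ∃ C : ℝ, ∀ v : ℝ × ℝ, ‖iteratedFDeriv ℝ 2 (Function.uncurry h) v‖ ≤ C)
    (z : ℤ → ℝ) (hz : IsConfig p q z) (hzs : Stationary h z)
    (v : ℝ → ℤ → ℝ) (hv : IsGradSol h p q (Set.Ici 0) v)
    (xs : ℤ → ℝ) (hxs : IsConfig p q xs)
    (hlim : ∀ k : ℤ, Tendsto (fun t => v t k) atTop (nhds (xs k))) :
    ((∀ k : ℤ, v 0 k ≤ z k) → ∀ k : ℤ, xs k ≤ z k) ∧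
    ((∀ k : ℤ, z k ≤ v 0 k) → ∀ k : ℤ, z k ≤ xs k) := by
  obtain ⟨C, hbdC⟩ := hbd
  have hC : 0 ≤ C := le_trans (norm_nonneg _) (hbdC 0)
  have lip2 := pd2_lip hC2 hbdC
  have lip1 := pd1_lip hC2 hbdC
  have anti2 := pd2_anti htwist
  have anti1 := pd1_anti hC2 htwist
  have hK : (0:ℝ) ≤ 4 * C := by linarith
  constructor
  · intro hinit k
    have hres := flow_nonpos q hq hK (fun k t => v t k - z k)
      (fun k t => -(pd2 h (v t (k-1)) (v t k) + pd1 h (v t k) (v t (k+1))))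
      (fun k t ht => by
        have h1 := hv.1 t ht k
        have h2 := hz k
        rw [h1, h2]; ring)
      (fun k t ht => (hv.2 k t ht).sub_const (z k))
      (fun t ht k M hM hall hkM => by
        have hz0 := hzs k
        have hcore := core_estimate hC lip2 lip1 anti2 anti1
          (v t (k-1)) (z (k-1)) (v t k) (z k) (v t (k+1)) (z (k+1)) M hM
          (hall (k-1)) hkM (hall (k+1))
        linarith)
      (fun k => sub_nonpos.2 (hinit k))
    have htend : Tendsto (fun t => v t k - z k) atTop (nhds (xs k - z k)) :=
      (hlim k).sub_const (z k)
    have hle : xs k - z k ≤ 0 :=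
      le_of_tendsto htend (eventually_atTop.2 ⟨0, fun t ht => hres t ht k⟩)
    linarith
  · intro hinit k
    have hres := flow_nonpos q hq hK (fun k t => z k - v t k)
      (fun k t => pd2 h (v t (k-1)) (v t k) + pd1 h (v t k) (v t (k+1)))
      (fun k t ht => by
        have h1 := hv.1 t ht k
        have h2 := hz k
        rw [h1, h2]; ring)
      (fun k t ht => by
        have := (hv.2 k t ht).const_sub (z k)
        simpa using this)
      (fun t ht k M hM hall hkM => by
        have hz0 := hzs k
        have hcore := core_estimate hC lip2 lip1 anti2 anti1
          (z (k-1)) (v t (k-1)) (z k) (v t k) (z (k+1)) (v t (k+1)) M hM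
          (hall (k-1)) hkM (hall (k+1))
        linarith)
      (fun k => sub_nonpos.2 (hinit k))
    have htend : Tendsto (fun t => z k - v t k) atTop (nhds (z k - xs k)) :=
      tendsto_const_nhds.sub (hlim k)
    have hle : z k - xs k ≤ 0 :=
      le_of_tendsto htend (eventually_atTop.2 ⟨0, fun t ht => hres t ht k⟩)
    linarith
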